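/- arXiv:1907.01699 — 5 statements merged into one kernel-verified Lean document; each statement's English description precedes it below -/
import Mathlib

section
/- Let D = {(x,y) ∈ ℝ² : 1 < x ≤ 2 and exp(−1/(x−1)) ≤ y ≤ exp(−1)}. Then the function (x,y) ↦ 1/(x·y) is NOT Lebesgue-integrable on D (i.e., ¬ IntegrableOn (fun p => 1/(p.1 * p.2)) D with respect to the Lebesgue measure on ℝ²). -/
/-!
By Fubini, integrability of `1 / (x * y)` on the region would make the fibre integral
`x ↦ ∫_{exp (-1/(x-1))}^{exp (-1)} dy / (x * y) = (x - 1)⁻¹ - 2 * x⁻¹` integrable on `(1, 2]`,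
which the `(x - 1)⁻¹` singularity at `x = 1` rules out.
-/

open MeasureTheory Real Set

section Fiber

variable {α β E : Type*} [MeasurableSpace α] [MeasurableSpace β] {μ : Measure α} {ν : Measure β}
  [SFinite ν] [NormedAddCommGroup E] [NormedSpace ℝ E]

theorem MeasureTheory.IntegrableOn.integrable_setIntegral_fiber {f : α × β → E}
    {s : Set (α × β)} (hs : MeasurableSet s) (hf : IntegrableOn f s (μ.prod ν)) :
    Integrable (fun x => ∫ y in Prod.mk x ⁻¹' s, f (x, y) ∂ν) μ := by
  refine ((integrable_indicator_iff hs).2 hf).integral_prod_left.congr (ae_of_all _ fun x => ?_)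
  dsimp only
  rw [← integral_indicator (measurable_prodMk_left hs)]
  rfl

end Fiber

theorem setIntegral_Icc_one_div_mul (x : ℝ) {a b : ℝ} (ha : 0 < a) (hab : a ≤ b) :
    ∫ y in Icc a b, 1 / (x * y) = x⁻¹ * (log b - log a) := by
  simp_rw [integral_Icc_eq_integral_Ioc, ← intervalIntegral.integral_of_le hab, one_div, mul_inv,
    intervalIntegral.integral_const_mul, integral_inv_of_pos ha (ha.trans_le hab),
    log_div (ha.trans_le hab).ne' ha.ne']

theorem not_integrableOn_Ioc_sub_inv_sub {f : ℝ → ℝ} {a b : ℝ} (hab : a < b)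
    (hf : IntegrableOn f (Ioc a b)) : ¬ IntegrableOn (fun x => (x - a)⁻¹ - f x) (Ioc a b) := by
  intro h
  have : IntervalIntegrable (fun x => (x - a)⁻¹) volume a b := by
    rw [intervalIntegrable_iff_integrableOn_Ioc_of_le hab.le]
    simpa only [Pi.add_def, sub_add_cancel] using h.add hf
  simp [hab.ne, left_mem_uIcc] at this

def counterexampleRegion : Set (ℝ × ℝ) :=
  {p | 1 < p.1 ∧ p.1 ≤ 2 ∧ exp (-1 / (p.1 - 1)) ≤ p.2 ∧ p.2 ≤ exp (-1)}

theorem measurableSet_counterexampleRegion : MeasurableSet counterexampleRegion := by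
  unfold counterexampleRegion
  measurability

theorem preimage_mk_counterexampleRegion {x : ℝ} (hx : x ∈ Ioc 1 2) :
    Prod.mk x ⁻¹' counterexampleRegion = Icc (exp (-1 / (x - 1))) (exp (-1)) := by
  ext y
  simp [counterexampleRegion, hx.1, hx.2]

theorem setIntegral_preimage_mk_counterexampleRegion {x : ℝ} (hx : x ∈ Ioc 1 2) :
    ∫ y in Prod.mk x ⁻¹' counterexampleRegion, 1 / (x * y) = (x - 1)⁻¹ - 2 * x⁻¹ := by
  obtain ⟨hx1, hx2⟩ := hx
  have hsub : 0 < x - 1 := sub_pos.2 hx1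
  have hab : exp (-1 / (x - 1)) ≤ exp (-1) := by
    rw [exp_le_exp, neg_div, neg_le_neg_iff, one_le_div hsub]
    linarith
  rw [preimage_mk_counterexampleRegion ⟨hx1, hx2⟩, setIntegral_Icc_one_div_mul x (exp_pos _) hab,
    log_exp, log_exp]
  field_simp
  ring

/-- The paper's counterexample (Remark `counter example` (1)): the function
`(x, y) ↦ 1/(x·y)` is not Lebesgue-integrable on the region
`D = {(x,y) : 1 < x ≤ 2, exp(−1/(x−1)) ≤ y ≤ exp(−1)}` of `ℝ²`, i.e. the integral
`∫_D (dz₁/z₁)∧(dz₂/z₂)` diverges. -/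
theorem not_integrableOn_counterexample :
    ¬ MeasureTheory.IntegrableOn (fun p : ℝ × ℝ => 1 / (p.1 * p.2))
      {p : ℝ × ℝ | 1 < p.1 ∧ p.1 ≤ 2 ∧
        Real.exp (-1 / (p.1 - 1)) ≤ p.2 ∧ p.2 ≤ Real.exp (-1)} := by
  intro h
  rw [Measure.volume_eq_prod] at h
  have hfiber := h.integrable_setIntegral_fiber measurableSet_counterexampleRegion
  have hinv : IntegrableOn (fun x : ℝ => 2 * x⁻¹) (Ioc 1 2) :=
    (ContinuousOn.integrableOn_Icc (continuousOn_const.mul (continuousOn_inv₀.mono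
      fun x hx => (one_pos.trans_le hx.1).ne'))).mono_set Ioc_subset_Icc_self
  exact not_integrableOn_Ioc_sub_inv_sub one_lt_two hinv (hfiber.integrableOn.congr_fun
    (fun x hx => setIntegral_preimage_mk_counterexampleRegion hx) measurableSet_Ioc)
end

section
/- Let k ≥ 1 be an integer and let a be a real number with 0 < a < 1. Let Δ = {t : Fin k → ℝ | 0 < t 0, t j < t (j+1) for all j < k−1, and t (k−1) < a} be the open simplex of increasing k-tuples below a. Then the function t ↦ (1/(1 − t 0)) · ∏_{j=1}^{k−1} (1/t j) is Lebesgue-integrable on Δ, and its integral equals ∑_{n=1}^∞ aⁿ/nᵏ (the value Li_k(a) of the k-th polylogarithm at a). -/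
/-!
Expand `1 / (1 - t 0) = ∑ₙ (t 0) ^ n` and integrate term by term (monotone convergence). For the
`n`-th term `(t 0) ^ n * ∏_{j ≥ 1} (t j)⁻¹`, integrating out `t 0 ∈ (0, t 1)` gives
`(t 1) ^ (n + 1) / (n + 1)`, and the factor `(t 1)⁻¹` brings this back to the same shape one
dimension lower. After `k` steps only `a ^ (n + 1) / (n + 1) ^ k` remains.
-/

open MeasureTheory Set

lemma setLIntegral_Ioo_pow {b : ℝ} (hb : 0 ≤ b) (n : ℕ) :
    ∫⁻ x in Ioo 0 b, ENNReal.ofReal (x ^ n) = ENNReal.ofReal (b ^ (n + 1) / (n + 1)) := by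
  rw [← ofReal_integral_eq_lintegral_ofReal, ← integral_Ioc_eq_integral_Ioo,
    ← intervalIntegral.integral_of_le hb, integral_pow]
  · norm_num
  · exact (continuous_pow n).integrableOn_Icc.mono_set Ioo_subset_Icc_self
  · filter_upwards [ae_restrict_mem measurableSet_Ioo] with x hx
    exact pow_nonneg hx.1.le n

lemma integrableOn_and_setIntegral_eq_of_setLIntegral_eq {α : Type*} [MeasurableSpace α]
    {μ : Measure α} {s : Set α} {f : α → ℝ} {c : ℝ}
    (hf : AEStronglyMeasurable f (μ.restrict s)) (hf_nonneg : 0 ≤ᵐ[μ.restrict s] f)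
    (hc : 0 ≤ c) (h : ∫⁻ x in s, ENNReal.ofReal (f x) ∂μ = ENNReal.ofReal c) :
    IntegrableOn f s μ ∧ ∫ x in s, f x ∂μ = c := by
  refine ⟨⟨hf, ?_⟩, ?_⟩
  · rw [hasFiniteIntegral_iff_ofReal hf_nonneg, h]
    exact ENNReal.ofReal_lt_top
  · rw [integral_eq_lintegral_of_nonneg_ae hf_nonneg hf, h, ENNReal.toReal_ofReal hc]

lemma lintegral_fin_cons {α : Type*} [MeasureSpace α] [SigmaFinite (volume : Measure α)]
    {m : ℕ} {g : (Fin (m + 1) → α) → ENNReal} (hg : Measurable g) :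
    ∫⁻ t, g t = ∫⁻ s : Fin m → α, ∫⁻ x : α, g (Fin.cons x s) := by
  let e := MeasurableEquiv.piFinSuccAbove (fun _ : Fin (m + 1) => α) 0
  rw [← ((volume_preserving_piFinSuccAbove _ 0).symm e).lintegral_comp_emb
      e.symm.measurableEmbedding, Measure.volume_eq_prod,
    lintegral_prod_symm' (fun p => g (e.symm p)) (hg.comp e.symm.measurable)]
  simp only [e, MeasurableEquiv.piFinSuccAbove_symm_apply, Fin.insertNthEquiv, Equiv.coe_fn_mk,
    Fin.insertNth_zero']

def simplex (m : ℕ) (a : ℝ) : Set (Fin (m + 1) → ℝ) :=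
  {t | 0 < t 0 ∧ (∀ i : Fin m, t i.castSucc < t i.succ) ∧ t (Fin.last m) < a}

namespace simplex

variable {m : ℕ} {a : ℝ} {t : Fin (m + 1) → ℝ}

lemma measurableSet (m : ℕ) (a : ℝ) : MeasurableSet (simplex m a) := by
  have h_incr :
      MeasurableSet {t : Fin (m + 1) → ℝ | ∀ i : Fin m, t i.castSucc < t i.succ} := by
    rw [ofPred_forall]
    exact .iInter fun i => measurableSet_lt (measurable_pi_apply _) (measurable_pi_apply _)
  exact (measurableSet_lt measurable_const (measurable_pi_apply 0)).inter
    (h_incr.inter (measurableSet_lt (measurable_pi_apply _) measurable_const))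

lemma strictMono (ht : t ∈ simplex m a) : StrictMono t :=
  Fin.strictMono_iff_lt_succ.2 ht.2.1

lemma pos (ht : t ∈ simplex m a) (i : Fin (m + 1)) : 0 < t i :=
  ht.1.trans_le ((strictMono ht).monotone (Fin.zero_le i))

lemma lt (ht : t ∈ simplex m a) (i : Fin (m + 1)) : t i < a :=
  ((strictMono ht).monotone (Fin.le_last i)).trans_lt ht.2.2

lemma zero_eq_preimage (a : ℝ) : simplex 0 a = (fun t => t 0) ⁻¹' Ioo 0 a := by
  ext t
  simp [simplex, Fin.last_zero]

lemma cons_mem_iff {x : ℝ} {s : Fin (m + 1) → ℝ} :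
    (Fin.cons x s : Fin (m + 2) → ℝ) ∈ simplex (m + 1) a ↔
      x ∈ Ioo 0 (s 0) ∧ s ∈ simplex m a := by
  simp only [simplex, mem_ofPred_eq, mem_Ioo, Fin.forall_fin_succ, Fin.cons_zero, Fin.cons_succ,
    Fin.castSucc_zero, ← Fin.succ_castSucc, Fin.cons_last]
  constructor
  · rintro ⟨hx, ⟨hxs, hs⟩, hlast⟩
    exact ⟨⟨hx, hxs⟩, hx.trans hxs, hs, hlast⟩
  · rintro ⟨⟨hx, hxs⟩, -, hs, hlast⟩
    exact ⟨hx, ⟨hxs, hs⟩, hlast⟩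

lemma indicator_cons {x : ℝ} {s : Fin (m + 1) → ℝ} (g : (Fin (m + 2) → ℝ) → ENNReal) :
    (simplex (m + 1) a).indicator g (Fin.cons x s)
      = (simplex m a).indicator
          (fun s => (Ioo 0 (s 0)).indicator (fun x => g (Fin.cons x s)) x) s := by
  by_cases hs : s ∈ simplex m a <;> by_cases hx : x ∈ Ioo 0 (s 0) <;>
    simp [indicator, cons_mem_iff, hs, hx]

end simplex

noncomputable def polylogTerm (m n : ℕ) (t : Fin (m + 1) → ℝ) : ℝ :=
  t 0 ^ n * ∏ j : Fin m, (t j.succ)⁻¹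

lemma measurable_polylogTerm (m n : ℕ) : Measurable (polylogTerm m n) :=
  ((measurable_pi_apply 0).pow_const n).mul
    (Finset.measurable_prod _ fun _ _ => (measurable_pi_apply _).inv)

lemma polylogTerm_nonneg {m n : ℕ} {a : ℝ} {t : Fin (m + 1) → ℝ} (ht : t ∈ simplex m a) :
    0 ≤ polylogTerm m n t :=
  mul_nonneg (pow_nonneg (simplex.pos ht 0).le n)
    (Finset.prod_nonneg fun _ _ => inv_nonneg.2 (simplex.pos ht _).le)

lemma polylogTerm_succ_cons (m n : ℕ) (x : ℝ) (s : Fin (m + 1) → ℝ) :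
    polylogTerm (m + 1) n (Fin.cons x s) = x ^ n * ∏ j, (s j)⁻¹ := by
  simp only [polylogTerm, Fin.cons_zero, Fin.cons_succ]

lemma hasSum_polylogTerm {m : ℕ} {a : ℝ} (ha : a ≤ 1) {t : Fin (m + 1) → ℝ}
    (ht : t ∈ simplex m a) :
    HasSum (fun n => polylogTerm m n t) ((1 - t 0)⁻¹ * ∏ j : Fin m, (t j.succ)⁻¹) :=
  (hasSum_geometric_of_lt_one (simplex.pos ht 0).le ((simplex.lt ht 0).trans_le ha)).mul_right _

lemma lintegral_polylogTerm_cons (m n : ℕ) {a : ℝ} {s : Fin (m + 1) → ℝ}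
    (hs : s ∈ simplex m a) :
    ∫⁻ x in Ioo 0 (s 0), ENNReal.ofReal (polylogTerm (m + 1) n (Fin.cons x s))
      = ENNReal.ofReal (polylogTerm m n s / (n + 1)) := by
  have hs0 := simplex.pos hs 0
  calc ∫⁻ x in Ioo 0 (s 0), ENNReal.ofReal (polylogTerm (m + 1) n (Fin.cons x s))
      = ∫⁻ x in Ioo 0 (s 0), ENNReal.ofReal (x ^ n) * ENNReal.ofReal (∏ j, (s j)⁻¹) := by
        refine setLIntegral_congr_fun measurableSet_Ioo fun x hx => ?_
        rw [polylogTerm_succ_cons, ENNReal.ofReal_mul (pow_nonneg hx.1.le n)]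
    _ = ENNReal.ofReal (s 0 ^ (n + 1) / (n + 1) * ∏ j, (s j)⁻¹) := by
        rw [lintegral_mul_const' _ _ ENNReal.ofReal_ne_top, setLIntegral_Ioo_pow hs0.le,
          ← ENNReal.ofReal_mul (by positivity)]
    _ = ENNReal.ofReal (polylogTerm m n s / (n + 1)) := by
        rw [Fin.prod_univ_succ, polylogTerm]
        congr 1
        field_simp
        ring

lemma lintegral_simplex_polylogTerm (m n : ℕ) {a : ℝ} (ha : 0 < a) :
    ∫⁻ t in simplex m a, ENNReal.ofReal (polylogTerm m n t)
      = ENNReal.ofReal (a ^ (n + 1) / ((n : ℝ) + 1) ^ (m + 1)) := by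
  induction m with
  | zero =>
    conv_rhs => rw [zero_add, pow_one]
    rw [simplex.zero_eq_preimage, ← setLIntegral_Ioo_pow ha.le,
      ← (volume_preserving_funUnique (Fin 1) ℝ).setLIntegral_comp_preimage measurableSet_Ioo
        (f := fun x => ENNReal.ofReal (x ^ n)) (by fun_prop)]
    simp only [polylogTerm, Finset.univ_eq_empty, Finset.prod_empty, mul_one]
    rfl
  | succ m ih =>
    calc ∫⁻ t in simplex (m + 1) a, ENNReal.ofReal (polylogTerm (m + 1) n t)
        = ∫⁻ s, ∫⁻ x, (simplex (m + 1) a).indicator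
            (fun t => ENNReal.ofReal (polylogTerm (m + 1) n t)) (Fin.cons x s) := by
          rw [← lintegral_indicator (simplex.measurableSet _ _), lintegral_fin_cons]
          exact (ENNReal.measurable_ofReal.comp (measurable_polylogTerm _ _)).indicator
            (simplex.measurableSet _ _)
      _ = ∫⁻ s in simplex m a,
            ENNReal.ofReal (polylogTerm m n s) * ENNReal.ofReal (n + 1)⁻¹ := by
          simp_rw [simplex.indicator_cons]
          rw [← lintegral_indicator (simplex.measurableSet _ _)]
          refine lintegral_congr fun s => ?_
          by_cases hs : s ∈ simplex m a
          · simp only [indicator_of_mem hs]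
            rw [lintegral_indicator measurableSet_Ioo, lintegral_polylogTerm_cons m n hs,
              div_eq_mul_inv, ENNReal.ofReal_mul (polylogTerm_nonneg hs)]
          · simp [hs]
      _ = ENNReal.ofReal (a ^ (n + 1) / ((n : ℝ) + 1) ^ (m + 1 + 1)) := by
          rw [lintegral_mul_const' _ _ ENNReal.ofReal_ne_top, ih, ← ENNReal.ofReal_mul
            (by positivity), pow_succ _ (m + 1), div_mul_eq_div_div, div_eq_mul_inv (_ / _)]

lemma summable_pow_succ_div_pow {a : ℝ} (ha0 : 0 ≤ a) (ha1 : a < 1) (k : ℕ) :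
    Summable fun n : ℕ => a ^ (n + 1) / ((n : ℝ) + 1) ^ k := by
  refine .of_nonneg_of_le (fun n => by positivity) (fun n => ?_)
    ((summable_geometric_of_lt_one ha0 ha1).mul_left a)
  rw [← pow_succ']
  exact div_le_self (by positivity) (one_le_pow₀ (by simp))

lemma lintegral_simplex_eq_polylog (m : ℕ) {a : ℝ} (ha0 : 0 < a) (ha1 : a < 1) :
    ∫⁻ t in simplex m a, ENNReal.ofReal ((1 - t 0)⁻¹ * ∏ j : Fin m, (t j.succ)⁻¹)
      = ENNReal.ofReal (∑' n : ℕ, a ^ (n + 1) / ((n : ℝ) + 1) ^ (m + 1)) := by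
  calc ∫⁻ t in simplex m a, ENNReal.ofReal ((1 - t 0)⁻¹ * ∏ j : Fin m, (t j.succ)⁻¹)
      = ∫⁻ t in simplex m a, ∑' n, ENNReal.ofReal (polylogTerm m n t) := by
        refine setLIntegral_congr_fun (simplex.measurableSet m a) fun t ht => ?_
        have h := hasSum_polylogTerm ha1.le ht
        rw [← h.tsum_eq,
          ENNReal.ofReal_tsum_of_nonneg (fun n => polylogTerm_nonneg ht) h.summable]
    _ = ∑' n : ℕ, ENNReal.ofReal (a ^ (n + 1) / ((n : ℝ) + 1) ^ (m + 1)) := by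
        rw [lintegral_tsum fun n => (measurable_polylogTerm m n).ennreal_ofReal.aemeasurable]
        simp_rw [lintegral_simplex_polylogTerm m _ ha0]
    _ = ENNReal.ofReal (∑' n : ℕ, a ^ (n + 1) / ((n : ℝ) + 1) ^ (m + 1)) :=
        (ENNReal.ofReal_tsum_of_nonneg (fun n => by positivity)
          (summable_pow_succ_div_pow ha0.le ha1 _)).symm

/-- The iterated-integral evaluation of the `k`-th polylogarithm: for `0 < a < 1`,
the function `t ↦ (1/(1 − t 0)) · ∏_{j=1}^{k−1} 1/(t j)` is Lebesgue-integrable on the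
open simplex `Δ = {0 < t 0 < t 1 < ⋯ < t (k−1) < a}` and its integral equals
`Li_k(a) = ∑_{n≥1} aⁿ/nᵏ`. -/
theorem integral_simplex_eq_polylog (k : ℕ) (hk : 1 ≤ k) (a : ℝ) (ha0 : 0 < a)
    (ha1 : a < 1) :
    let Δ : Set (Fin k → ℝ) :=
      {t | 0 < t ⟨0, hk⟩ ∧
        (∀ j : ℕ, ∀ h : j + 1 < k, t ⟨j, by omega⟩ < t ⟨j + 1, h⟩) ∧
        t ⟨k - 1, by omega⟩ < a}
    let f : (Fin k → ℝ) → ℝ := fun t =>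
      (1 / (1 - t ⟨0, hk⟩)) * ∏ j ∈ Finset.univ.erase (⟨0, hk⟩ : Fin k), (1 / t j)
    MeasureTheory.IntegrableOn f Δ ∧
      ∫ t in Δ, f t = ∑' n : ℕ, a ^ (n + 1) / ((n : ℝ) + 1) ^ k := by
  obtain ⟨m, rfl⟩ : ∃ m, k = m + 1 := ⟨k - 1, by omega⟩
  intro Δ f
  have hΔ : Δ = simplex m a := by
    have hlast : (⟨m + 1 - 1, by omega⟩ : Fin (m + 1)) = Fin.last m := Fin.ext (by simp)
    ext t
    simp only [Δ, simplex, hlast]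
    exact and_congr_right' <| and_congr_left'
      ⟨fun h i => h i (by omega), fun h j hj => h ⟨j, by omega⟩⟩
  have hf : f = fun t => (1 - t 0)⁻¹ * ∏ j : Fin m, (t j.succ)⁻¹ := by
    funext t
    simp [f, Fin.univ_succ]
  have hf_nonneg : ∀ t ∈ simplex m a, 0 ≤ f t := fun t ht =>
    hf ▸ (hasSum_polylogTerm ha1.le ht).nonneg fun n => polylogTerm_nonneg ht
  rw [hΔ]
  refine integrableOn_and_setIntegral_eq_of_setLIntegral_eq ?_
    ((ae_restrict_iff' (simplex.measurableSet m a)).2 (ae_of_all _ hf_nonneg))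
    (tsum_nonneg fun n => by positivity) (hf ▸ lintegral_simplex_eq_polylog m ha0 ha1)
  rw [hf]
  fun_prop
end

section
/- Let E be a real vector space, K a geometric simplicial complex in E (in the sense of Mathlib's Geometry.SimplicialComplex), and L a subcomplex of K (a simplicial complex with L.faces ⊆ K.faces) which is full in K. Then for every face s of K, (convexHull ℝ ↑s) ∩ |L| = convexHull ℝ (↑s ∩ V(L)), where |L| denotes the union of the convex hulls of the faces of L and V(L) denotes the set of vertices of L. In particular, the intersection of each simplex of K with |L| is the convex hull of a (possibly empty) simplicial face of that simplex. -/
open Geometry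

namespace Geometry.SimplicialComplex

variable {𝕜 E : Type*} [Ring 𝕜] [PartialOrder 𝕜] [AddCommGroup E] [Module 𝕜 E]
  {K L : SimplicialComplex 𝕜 E} {s : Finset E}

theorem coe_subset_vertices {t : Finset E} (ht : t ∈ L.faces) : (t : Set E) ⊆ L.vertices :=
  L.vertices_eq ▸ Set.subset_biUnion_of_mem (u := fun t : Finset E ↦ (t : Set E)) ht

theorem convexHull_inter_space_subset (hsub : L.faces ⊆ K.faces) (hs : s ∈ K.faces) :
    convexHull 𝕜 (s : Set E) ∩ L.space ⊆ convexHull 𝕜 ((s : Set E) ∩ L.vertices) := by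
  rintro x ⟨hxs, hxL⟩
  obtain ⟨t, ht, hxt⟩ := L.mem_space_iff.1 hxL
  have hx_inter : x ∈ convexHull 𝕜 ((s : Set E) ∩ t) :=
    K.inter_subset_convexHull hs (hsub ht) ⟨hxs, hxt⟩
  exact convexHull_mono (Set.inter_subset_inter_right _ (coe_subset_vertices ht)) hx_inter

theorem convexHull_inter_vertices_subset_space
    (hfull : ∀ s ∈ K.faces, (s : Set E) ⊆ L.vertices → s ∈ L.faces) (hs : s ∈ K.faces) :
    convexHull 𝕜 ((s : Set E) ∩ L.vertices) ⊆ L.space := by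
  classical
  set t : Finset E := {x ∈ s | x ∈ L.vertices}
  have ht : (t : Set E) = (s : Set E) ∩ L.vertices := Finset.coe_filter _ _
  rw [← ht]
  rcases t.eq_empty_or_nonempty with h_empty | h_nonempty
  · simp [h_empty]
  · have htK : t ∈ K.faces := K.down_closed hs (Finset.filter_subset _ _) h_nonempty
    exact L.convexHull_subset_space (hfull t htK (ht ▸ Set.inter_subset_right))

end Geometry.SimplicialComplex

/-- If `L` is a full subcomplex of a geometric simplicial complex `K`, then for every
face `s` of `K` the intersection of the simplex `convexHull ℝ s` with the polytope `|L|`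
is the convex hull of `s ∩ V(L)`, i.e. a (possibly empty) simplicial face of `s`. -/
theorem full_subcomplex_inter_space {E : Type*} [AddCommGroup E] [Module ℝ E]
    (K L : Geometry.SimplicialComplex ℝ E)
    (hsub : L.faces ⊆ K.faces)
    (hfull : ∀ s ∈ K.faces, (s : Set E) ⊆ L.vertices → s ∈ L.faces) :
    ∀ s ∈ K.faces,
      convexHull ℝ (s : Set E) ∩ L.space = convexHull ℝ ((s : Set E) ∩ L.vertices) := by
  intro s hs
  exact (SimplicialComplex.convexHull_inter_space_subset hsub hs).antisymm <|
    Set.subset_inter (convexHull_mono Set.inter_subset_left)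
      (SimplicialComplex.convexHull_inter_vertices_subset_space hfull hs)
end

section
/- Let V be a type, K an abstract simplicial complex on V, and let L₁ and L₂ be subcomplexes of K such that L₂ is full in K and L₁ ∪ L₂ is full in K. Then N(L₁, K) ∩ L₂ = N(L₁ ∩ L₂, L₂), where on the left-hand side the intersection means the set of faces lying in both N(L₁,K) and L₂, and L₁ ∩ L₂ is the subcomplex whose faces are the common faces of L₁ and L₂. -/
/-- An abstract simplicial complex on `V`: a set of nonempty finite subsets of `V`
closed under passing to nonempty subsets. -/
def IsAbstractComplex {V : Type*} (K : Set (Finset V)) : Prop :=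
  (∀ σ ∈ K, σ.Nonempty) ∧ ∀ σ ∈ K, ∀ τ : Finset V, τ ⊆ σ → τ.Nonempty → τ ∈ K

/-- A subcomplex `L` of `K` is full in `K` if every face of `K` all of whose elements
are vertices of `L` belongs to `L`. -/
def IsFullIn {V : Type*} (K L : Set (Finset V)) : Prop :=
  ∀ σ ∈ K, (∀ v ∈ σ, ({v} : Finset V) ∈ L) → σ ∈ L

/-- The simplicial neighborhood `N(L, K)`: faces `σ` of `K` admitting `η ∈ K` with
`σ ⊆ η` such that some element of `η` is a vertex of `L`. -/
def simplicialNbhd {V : Type*} (K L : Set (Finset V)) : Set (Finset V) :=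
  {σ ∈ K | ∃ η ∈ K, σ ⊆ η ∧ ∃ v ∈ η, ({v} : Finset V) ∈ L}

/-!
Let `σ ∈ N(L₁, K) ∩ L₂`, witnessed by `η ⊇ σ` and a vertex `v ∈ η` of `L₁`. The face
`τ = σ ∪ {v}` of `K` has all its vertices in `L₁ ∪ L₂`, so by fullness `τ ∈ L₁ ∪ L₂`.
If `τ ∈ L₂`, then `τ` and `v` witness `σ ∈ N(L₁ ∩ L₂, L₂)`; if `τ ∈ L₁`, then `σ` itself
lies in `L₁ ∩ L₂`. The reverse inclusion is monotonicity of `N`.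
-/

namespace IsAbstractComplex

variable {V : Type*} {K L : Set (Finset V)}

theorem singleton_mem (hK : IsAbstractComplex K) {σ : Finset V} (hσ : σ ∈ K) {v : V}
    (hv : v ∈ σ) : ({v} : Finset V) ∈ K :=
  hK.2 σ hσ {v} (Finset.singleton_subset_iff.2 hv) (Finset.singleton_nonempty v)

theorem union (hK : IsAbstractComplex K) (hL : IsAbstractComplex L) :
    IsAbstractComplex (K ∪ L) := by
  refine ⟨fun σ hσ => hσ.elim (hK.1 σ) (hL.1 σ), fun σ hσ τ hτσ hτ => ?_⟩
  rcases hσ with hσ | hσ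
  · exact Or.inl (hK.2 σ hσ τ hτσ hτ)
  · exact Or.inr (hL.2 σ hσ τ hτσ hτ)

theorem inter (hK : IsAbstractComplex K) (hL : IsAbstractComplex L) :
    IsAbstractComplex (K ∩ L) :=
  ⟨fun σ hσ => hK.1 σ hσ.1,
    fun σ hσ τ hτσ hτ => ⟨hK.2 σ hσ.1 τ hτσ hτ, hL.2 σ hσ.2 τ hτσ hτ⟩⟩

end IsAbstractComplex

theorem IsFullIn.insert_mem {V : Type*} [DecidableEq V] {K L : Set (Finset V)}
    (hfull : IsFullIn K L) (hL : IsAbstractComplex L) {σ : Finset V} (hσ : σ ∈ L) {v : V}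
    (hv : ({v} : Finset V) ∈ L) (hK : insert v σ ∈ K) : insert v σ ∈ L := by
  refine hfull _ hK fun w hw => ?_
  rcases Finset.mem_insert.1 hw with rfl | hw
  · exact hv
  · exact hL.singleton_mem hσ hw

section simplicialNbhd

variable {V : Type*} {K K' L L' M : Set (Finset V)}

theorem simplicialNbhd_subset : simplicialNbhd K L ⊆ K := fun _ hσ => hσ.1

theorem simplicialNbhd_mono (hK : K ⊆ K') (hL : L ⊆ L') :
    simplicialNbhd K L ⊆ simplicialNbhd K' L' := by
  rintro σ ⟨hσ, η, hη, hση, v, hv, hvL⟩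
  exact ⟨hK hσ, η, hK hη, hση, v, hv, hL hvL⟩

theorem subset_simplicialNbhd (hL : IsAbstractComplex L) (hLK : L ⊆ K) :
    L ⊆ simplicialNbhd K L := by
  intro σ hσ
  obtain ⟨v, hv⟩ := hL.1 σ hσ
  exact ⟨hLK hσ, σ, hLK hσ, subset_rfl, v, hv, hL.singleton_mem hσ hv⟩

theorem simplicialNbhd_inter_subset [DecidableEq V] (hK : IsAbstractComplex K)
    (hL : IsAbstractComplex L) (hM : IsAbstractComplex M) (hfull : IsFullIn K (L ∪ M)) :
    simplicialNbhd K L ∩ M ⊆ simplicialNbhd M (L ∩ M) := by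
  rintro σ ⟨⟨-, η, hη, hση, v, hvη, hvL⟩, hσM⟩
  have hτK : insert v σ ∈ K :=
    hK.2 η hη _ (Finset.insert_subset hvη hση) (Finset.insert_nonempty v σ)
  rcases hfull.insert_mem (hL.union hM) (Or.inr hσM) (Or.inl hvL) hτK with hτL | hτM
  · have hσL : σ ∈ L := hL.2 _ hτL σ (Finset.subset_insert v σ) (hM.1 σ hσM)
    exact subset_simplicialNbhd (hL.inter hM) Set.inter_subset_right ⟨hσL, hσM⟩
  · have hv : v ∈ insert v σ := Finset.mem_insert_self v σ
    exact ⟨hσM, _, hτM, Finset.subset_insert v σ, v, hv, hvL, hM.singleton_mem hτM hv⟩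

end simplicialNbhd

theorem nbhd_inter_full_general {V : Type*} (K L₁ L₂ : Set (Finset V))
    (hK : IsAbstractComplex K) (hL₁ : IsAbstractComplex L₁) (hL₂ : IsAbstractComplex L₂)
    (hL₂K : L₂ ⊆ K)
    (hfull₁₂ : IsFullIn K (L₁ ∪ L₂)) :
    simplicialNbhd K L₁ ∩ L₂ = simplicialNbhd L₂ (L₁ ∩ L₂) := by
  classical
  refine (simplicialNbhd_inter_subset hK hL₁ hL₂ hfull₁₂).antisymm fun σ hσ => ⟨?_, ?_⟩
  · exact simplicialNbhd_mono hL₂K Set.inter_subset_left hσ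
  · exact simplicialNbhd_subset hσ

/-- The paper's Lemma (res of neighbor): if `L₂` and `L₁ ∪ L₂` are full subcomplexes of
`K`, then `N(L₁, K) ∩ L₂ = N(L₁ ∩ L₂, L₂)`. -/
theorem nbhd_inter_full {V : Type*} (K L₁ L₂ : Set (Finset V))
    (hK : IsAbstractComplex K) (hL₁ : IsAbstractComplex L₁) (hL₂ : IsAbstractComplex L₂)
    (hL₁K : L₁ ⊆ K) (hL₂K : L₂ ⊆ K)
    (hfull₂ : IsFullIn K L₂) (hfull₁₂ : IsFullIn K (L₁ ∪ L₂)) :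
    simplicialNbhd K L₁ ∩ L₂ = simplicialNbhd L₂ (L₁ ∩ L₂) :=
  nbhd_inter_full_general K L₁ L₂ hK hL₁ hL₂ hL₂K hfull₁₂
end

section
/- Let V be a type equipped with a partial order ≤, K an abstract simplicial complex on V, and L a full subcomplex of K. Assume the restriction of ≤ to each face of K is a total order, and that the ordering is good with respect to L, i.e., whenever v is a vertex of L, w is a vertex of K, and v ≤ w, then w is a vertex of L. Then for every face σ ∈ K and every v ∈ σ which is a vertex of L, the set {w ∈ σ : v ≤ w} is a face of L. -/
section

variable {V : Type*} {K L : Set (Finset V)} {σ τ : Finset V}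

theorem IsAbstractComplex.singleton_mem_s6 (hK : IsAbstractComplex K) (hσ : σ ∈ K) {v : V}
    (hv : v ∈ σ) : ({v} : Finset V) ∈ K :=
  hK.2 σ hσ {v} (Finset.singleton_subset_iff.mpr hv) (Finset.singleton_nonempty v)

theorem IsFullIn.mem_of_subset (hfull : IsFullIn K L) (hK : IsAbstractComplex K) (hσ : σ ∈ K)
    (hτσ : τ ⊆ σ) (hτ : τ.Nonempty) (hvert : ∀ v ∈ τ, ({v} : Finset V) ∈ L) : τ ∈ L :=
  hfull τ (hK.2 σ hσ τ hτσ hτ) hvert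

end

theorem upper_set_of_good_ordering_general {V : Type*} [PartialOrder V]
    [DecidableRel ((· ≤ ·) : V → V → Prop)]
    (K L : Set (Finset V)) (hK : IsAbstractComplex K)
    (hfull : IsFullIn K L)
    (hgood : ∀ v w : V, ({v} : Finset V) ∈ L → ({w} : Finset V) ∈ K → v ≤ w →
      ({w} : Finset V) ∈ L) :
    ∀ σ ∈ K, ∀ v ∈ σ, ({v} : Finset V) ∈ L →
      σ.filter (fun w => v ≤ w) ∈ L := by
  intro σ hσ v hv hvL
  have hv_upper : v ∈ σ.filter (fun w => v ≤ w) := Finset.mem_filter.mpr ⟨hv, le_rfl⟩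
  refine hfull.mem_of_subset hK hσ (Finset.filter_subset _ σ) ⟨v, hv_upper⟩ ?_
  intro w hw
  obtain ⟨hwσ, hvw⟩ := Finset.mem_filter.mp hw
  exact hgood v w hvL (hK.singleton_mem_s6 hσ hwσ) hvw

/-- For a good ordering of `K` with respect to a full subcomplex `L`: if
`σ = [v₀ < ⋯ < v_n]` is a face of `K` and `v ∈ σ` is a vertex of `L`, then
`{w ∈ σ : v ≤ w}` is a face of `L`. -/
theorem upper_set_of_good_ordering {V : Type*} [PartialOrder V]
    [DecidableRel ((· ≤ ·) : V → V → Prop)]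
    (K L : Set (Finset V)) (hK : IsAbstractComplex K) (hL : IsAbstractComplex L)
    (hLK : L ⊆ K) (hfull : IsFullIn K L)
    (htotal : ∀ σ ∈ K, ∀ v ∈ σ, ∀ w ∈ σ, v ≤ w ∨ w ≤ v)
    (hgood : ∀ v w : V, ({v} : Finset V) ∈ L → ({w} : Finset V) ∈ K → v ≤ w →
      ({w} : Finset V) ∈ L) :
    ∀ σ ∈ K, ∀ v ∈ σ, ({v} : Finset V) ∈ L →
      σ.filter (fun w => v ≤ w) ∈ L :=
  upper_set_of_good_ordering_general K L hK hfull hgood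
end
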